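/- With D diagonal positive definite and F_ij = E_ij + E_ji (i ≤ j), the Kubo-Mori inner products are: G_D(F_ij, F_kl) = 0 if (i,j) ≠ (k,l) (with i≤j, k≤l); G_D(F_ij, F_ij) = 2 m_ij for i < j; and G_D(F_ii, F_ii) = 4 m_ii = 4/λ_i. -/

import Mathlib

/-!
Everything is diagonal: `(D + t)⁻¹ = diagonal ((λ + t)⁻¹)`, and conjugating a matrix unit by
diagonal matrices only rescales it, so the trace in `G_D(F_ij, F_kl)` is the constant
`2 [i = k ∧ j = l] + 2 [i = l ∧ j = k]` times `(λ_i + t)⁻¹ (λ_j + t)⁻¹`. Integrating gives that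
constant times `m_ij`, and `m_ii = 1/λ_i` because `-(λ_i + t)⁻¹` is a primitive vanishing at `∞`.
-/

open MeasureTheory Matrix

section MatrixUnits

variable {ι R : Type*} [Fintype ι] [DecidableEq ι] [CommRing R]

omit [Fintype ι] in
theorem diagonal_add_smul_one (v : ι → R) (t : R) :
    diagonal v + t • (1 : Matrix ι ι R) = diagonal fun i => v i + t := by
  rw [smul_one_eq_diagonal, diagonal_add]

theorem inv_diagonal_of_ne_zero {K : Type*} [Field K] {v : ι → K} (hv : ∀ i, v i ≠ 0) :
    (diagonal v)⁻¹ = diagonal fun i => (v i)⁻¹ := by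
  refine inv_eq_right_inv ?_
  rw [diagonal_mul_diagonal, ← diagonal_one]
  exact congrArg diagonal (funext fun i => mul_inv_cancel₀ (hv i))

theorem diagonal_mul_single_mul_diagonal (a b : ι → R) (i j : ι) (c : R) :
    diagonal a * single i j c * diagonal b = single i j (a i * c * b j) := by
  ext r s
  simp only [mul_diagonal, diagonal_mul, single_apply]
  split_ifs with h
  · rw [h.1, h.2]
  · simp

theorem trace_diagonal_mul_single_mul_diagonal_mul (a b : ι → R) (i j : ι) (X : Matrix ι ι R) :
    trace (diagonal a * single i j 1 * diagonal b * X) = a i * b j * X j i := by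
  rw [diagonal_mul_single_mul_diagonal, trace_single_mul, smul_eq_mul, mul_one]

theorem trace_diagonal_mul_symm_single_mul_diagonal_mul_symm_single (a : ι → R) (i j k p : ι) :
    trace (diagonal a * (single i j 1 + single j i 1) * diagonal a *
        (single k p 1 + single p k 1)) =
      ((if i = k ∧ j = p then 2 else 0) + (if i = p ∧ j = k then 2 else 0)) * (a i * a j) := by
  rw [Matrix.mul_add (diagonal a), Matrix.add_mul, Matrix.add_mul, trace_add,
    trace_diagonal_mul_single_mul_diagonal_mul, trace_diagonal_mul_single_mul_diagonal_mul]
  simp only [Matrix.add_apply, single_apply]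
  grind

end MatrixUnits

open Filter Set in
theorem integral_Ioi_inv_add_mul_inv_add {a : ℝ} (ha : 0 < a) :
    ∫ t in Ioi 0, (a + t)⁻¹ * (a + t)⁻¹ = a⁻¹ := by
  have hderiv : ∀ x ∈ Ici (0 : ℝ),
      HasDerivAt (fun y => -(a + y)⁻¹) ((a + x)⁻¹ * (a + x)⁻¹) x := fun x hx => by
    have hax : a + x ≠ 0 := by have : (0 : ℝ) ≤ x := hx; positivity
    rw [show (a + x)⁻¹ * (a + x)⁻¹ = -(-1 / (a + x) ^ 2) by field_simp]
    exact (((hasDerivAt_id x).const_add a).inv hax).neg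
  have hlim : Tendsto (fun y => -(a + y)⁻¹) atTop (nhds 0) := by
    simpa using (tendsto_atTop_add_const_left _ a tendsto_id).inv_tendsto_atTop.neg
  have hnonneg : ∀ x ∈ Ioi (0 : ℝ), 0 ≤ (a + x)⁻¹ * (a + x)⁻¹ := fun x hx => by
    have : (0 : ℝ) < x := hx; positivity
  rw [integral_Ioi_of_hasDerivAt_of_nonneg' hderiv hnonneg hlim]
  simp

theorem integral_trace_resolvent_mul_symm_single_mul_resolvent_mul_symm_single
    {ι : Type*} [Fintype ι] [DecidableEq ι] {l : ι → ℝ} (hl : ∀ i, 0 ≤ l i) (i j k p : ι) :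
    ∫ t in Set.Ioi (0 : ℝ), trace ((diagonal l + t • 1)⁻¹ * (single i j 1 + single j i 1) *
        (diagonal l + t • 1)⁻¹ * (single k p 1 + single p k 1)) =
      ((if i = k ∧ j = p then 2 else 0) + (if i = p ∧ j = k then 2 else 0)) *
        ∫ t in Set.Ioi (0 : ℝ), (l i + t)⁻¹ * (l j + t)⁻¹ := by
  rw [← integral_const_mul]
  refine setIntegral_congr_fun measurableSet_Ioi fun t (ht : 0 < t) => ?_
  have hpos : ∀ r, l r + t ≠ 0 := fun r => by linarith [hl r]
  rw [diagonal_add_smul_one, inv_diagonal_of_ne_zero hpos,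
    trace_diagonal_mul_symm_single_mul_diagonal_mul_symm_single]

/-- With `D` diagonal positive definite and `F_ij = E_ij + E_ji` (`i ≤ j`), the Kubo-Mori
inner products are: `G_D(F_ij, F_kl) = 0` for `(i,j) ≠ (k,l)`; `G_D(F_ij, F_ij) = 2 m_ij`
for `i < j`; and `G_D(F_ii, F_ii) = 4 m_ii = 4/λ_i`. -/
theorem kubo_mori_on_symmetrized_units (n : ℕ) (l : Fin n → ℝ) (hl : ∀ i, 0 < l i) :
    let D : Matrix (Fin n) (Fin n) ℝ := Matrix.diagonal l
    let F : Fin n → Fin n → Matrix (Fin n) (Fin n) ℝ := fun i j =>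
      Matrix.single i j 1 + Matrix.single j i 1
    let G : Matrix (Fin n) (Fin n) ℝ → Matrix (Fin n) (Fin n) ℝ → ℝ := fun X Y =>
      ∫ t in Set.Ioi (0:ℝ), Matrix.trace ((D + t • 1)⁻¹ * X * (D + t • 1)⁻¹ * Y)
    let m : Fin n → Fin n → ℝ := fun i j =>
      ∫ t in Set.Ioi (0:ℝ), (l i + t)⁻¹ * (l j + t)⁻¹
    (∀ i j k p : Fin n, i ≤ j → k ≤ p → (i, j) ≠ (k, p) → G (F i j) (F k p) = 0) ∧
    (∀ i j : Fin n, i < j → G (F i j) (F i j) = 2 * m i j) ∧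
    (∀ i : Fin n, G (F i i) (F i i) = 4 * m i i ∧ m i i = 1 / l i) := by
  intro D F G m
  have hG : ∀ i j k p, G (F i j) (F k p) =
      ((if i = k ∧ j = p then 2 else 0) + (if i = p ∧ j = k then 2 else 0)) * m i j :=
    integral_trace_resolvent_mul_symm_single_mul_resolvent_mul_symm_single fun i => (hl i).le
  refine ⟨fun i j k p hij hkp hne => ?_, fun i j hij => ?_, fun i => ⟨?_, ?_⟩⟩
  · have hsame : ¬(i = k ∧ j = p) := fun ⟨hik, hjp⟩ => hne (by rw [hik, hjp])
    have hswap : ¬(i = p ∧ j = k) := by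
      rintro ⟨rfl, rfl⟩
      exact hne (by rw [le_antisymm hij hkp])
    simp [hG, hsame, hswap]
  · simp [hG, hij.ne, hij.ne']
  · rw [hG]; norm_num
  · rw [one_div, ← integral_Ioi_inv_add_mul_inv_add (hl i)]
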